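/- Let a, b, c, d, e ∈ ℂ with a ≠ 0. Define P = -6(b/a)² + 16c/a, Q = 8(b/a)³ - 32cb/a² + 64d/a, and R = -3(b/a)⁴ + 16cb²/a³ - 64db/a² + 256e/a, and suppose Q = 0. Let y₀, s, t ∈ ℂ satisfy y₀² + (P/2)·y₀ + (P² - 4R)/16 = 0, s² = y₀, and t² = -(P/2 + y₀). Then for all x ∈ ℂ, a·x⁴ + b·x³ + c·x² + d·x + e = a·(x - X₁)·(x - X₂)·(x - X₃)·(x - X₄), where X₁ = (-(b/a) + s + t)/4, X₂ = (-(b/a) - s - t)/4, X₃ = (-(b/a) - s + t)/4, and X₄ = (-(b/a) + s - t)/4. -/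

import Mathlib

/-!
The substitution `z = 4x + b/a` turns `256/a` times the quartic into the depressed quartic
`z⁴ + P z² + Q z + R`. When `Q = 0` it is biquadratic in `z` and equals
`(z² - (s + t)²)(z² - (s - t)²)`: indeed `(s + t)² + (s - t)² = 2(s² + t²) = -P`, and
`((s + t)(s - t))² = (s² - t²)² = (2y₀ + P/2)² = R` by the quadratic equation for `y₀`.
-/

theorem quartic_eq_depressed {K : Type*} [Field K] {a : K} (ha : a ≠ 0) (b c d e x : K) :
    256 * (a*x^4 + b*x^3 + c*x^2 + d*x + e)
      = a * ((4*x + b/a)^4 + (-6*(b/a)^2 + 16*c/a) * (4*x + b/a)^2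
          + (8*(b/a)^3 - 32*c*b/a^2 + 64*d/a) * (4*x + b/a)
          + (-3*(b/a)^4 + 16*c*b^2/a^3 - 64*d*b/a^2 + 256*e/a)) := by
  field_simp
  ring

theorem biquadratic_eq_prod_of_resolvent {K : Type*} [Field K] [CharZero K] {P R y s t : K}
    (hy : y^2 + (P/2)*y + (P^2 - 4*R)/16 = 0) (hs : s^2 = y) (ht : t^2 = -(P/2 + y)) (z : K) :
    z^4 + P*z^2 + R = (z - s - t) * (z + s + t) * (z + s - t) * (z - s + t) := by
  have hsum : 2*(s^2 + t^2) = -P := by rw [hs, ht]; ring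
  have hprod : (s^2 - t^2)^2 = R := by rw [hs, ht]; linear_combination 4*hy
  linear_combination z^2 * hsum - hprod

theorem general_quartic_factorization_Q_zero (a b c d e : ℂ) (ha : a ≠ 0) (P Q R : ℂ)
    (hP : P = -6*(b/a)^2 + 16*c/a)
    (hQ : Q = 8*(b/a)^3 - 32*c*b/a^2 + 64*d/a)
    (hR : R = -3*(b/a)^4 + 16*c*b^2/a^3 - 64*d*b/a^2 + 256*e/a)
    (hQ0 : Q = 0)
    (y₀ s t : ℂ)
    (hy₀ : y₀^2 + (P/2)*y₀ + (P^2 - 4*R)/16 = 0)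
    (hs : s^2 = y₀) (ht : t^2 = -(P/2 + y₀)) :
    ∀ x : ℂ,
      a*x^4 + b*x^3 + c*x^2 + d*x + e
        = a*(x - (-(b/a) + s + t)/4)*(x - (-(b/a) - s - t)/4)
            *(x - (-(b/a) - s + t)/4)*(x - (-(b/a) + s - t)/4) := by
  intro x
  have h := quartic_eq_depressed ha b c d e x
  rw [← hP, ← hQ, ← hR, hQ0, zero_mul, add_zero,
    biquadratic_eq_prod_of_resolvent hy₀ hs ht] at h
  linear_combination h / 256
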